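/- Let A be a commutative algebra, and let U be an A-ring with a right admissible filtration. Then U is faithfully flat as a right A-module. -/
import Mathlib


/-!
STATEMENT 3: Let `A` be a commutative algebra and `U` an `A`-ring (ring extension
`ι : A →+* U`, with `A ⊆ U`, i.e. `ι` injective) equipped with a right admissible
filtration.  Then `U` is faithfully flat as a right `A`-module.

The right `A`-module structure on `U` is `a • u = u * ι a` (`A` is commutative, so right
modules are modules).  A right admissible filtration is an increasing exhaustive filtration
`F` of `A`-subbimodules with `F 0 = ι(A)`, `F n * F m ⊆ F (n+m)` and all successive
quotients finitely generated projective over `A`.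
-/

variable {A U : Type*}

/-- The shifted filtration, with the convention `F^{-1} U = 0`. -/
def prevFilt [CommRing A] [Ring U] [Module A U]
    (F : ℕ → Submodule A U) : ℕ → Submodule A U
  | 0 => ⊥
  | (k + 1) => F k

/-- The successive quotient `F^n U / F^{n-1} U`. -/
abbrev filtQuot [CommRing A] [Ring U] [Module A U]
    (F : ℕ → Submodule A U) (k : ℕ) :=
  (F k) ⧸ ((prevFilt F k).comap (F k).subtype)

open scoped TensorProduct in
theorem statement3 [CommRing A] [Ring U] [Module A U]
    (ι : A →+* U) (hι : Function.Injective ι)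
    (hsmul : ∀ (a : A) (u : U), a • u = u * ι a)
    (F : ℕ → Submodule A U) (hmono : Monotone F)
    (hexh : (⨆ n, F n) = (⊤ : Submodule A U))
    (hF0 : (F 0 : Set U) = Set.range ι)
    (hleft : ∀ (n : ℕ) (a : A) (u : U), u ∈ F n → ι a * u ∈ F n)
    (hmul : ∀ (n m : ℕ) (u v : U), u ∈ F n → v ∈ F m → u * v ∈ F (n + m))
    (hfg : ∀ n, Module.Finite A (filtQuot F n))
    (hproj : ∀ n, Module.Projective A (filtQuot F n)) :
    Module.FaithfullyFlat A U := by
  classical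
  -- `ι` as an `A`-linear map
  let ιl : A →ₗ[A] U :=
    { toFun := ι
      map_add' := fun a b => map_add ι a b
      map_smul' := fun c a => by
        rw [RingHom.id_apply, smul_eq_mul, hsmul, ← map_mul, mul_comm] }
  have h1 : ∀ n, (1 : U) ∈ F n := by
    intro n
    refine hmono (Nat.zero_le n) ?_
    show (1 : U) ∈ (F 0 : Set U)
    rw [hF0]
    exact ⟨1, map_one ι⟩
  have hrange : LinearMap.range ιl = F 0 := by
    apply le_antisymm
    · rintro x ⟨a, rfl⟩
      show (ιl a : U) ∈ (F 0 : Set U)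
      rw [hF0]; exact ⟨a, rfl⟩
    · intro x hx
      have : x ∈ Set.range ι := hF0 ▸ hx
      obtain ⟨a, rfl⟩ := this
      exact ⟨a, rfl⟩
  -- key inductive fact : each `F n` is projective and admits a retraction onto `A`
  have key : ∀ n, Module.Projective A (F n) ∧
      ∃ p : F n →ₗ[A] A, p ⟨1, h1 n⟩ = 1 := by
    intro n
    induction n with
    | zero =>
      let e0 : A ≃ₗ[A] F 0 :=
        (LinearEquiv.ofInjective ιl (show Function.Injective ιl from hι)).trans
          (LinearEquiv.ofEq _ _ hrange)
      have he0 : e0 1 = ⟨1, h1 0⟩ := by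
        apply Subtype.ext
        simp only [e0, LinearEquiv.trans_apply, LinearEquiv.coe_ofEq_apply,
          LinearEquiv.ofInjective_apply]
        exact map_one ι
      refine ⟨Module.Projective.of_equiv e0, e0.symm.toLinearMap, ?_⟩
      rw [← he0]
      simp
    | succ n ih =>
      haveI := ih.1
      obtain ⟨p, hp⟩ := ih.2
      haveI := hproj (n + 1)
      set K : Submodule A (F (n + 1)) :=
        ((prevFilt F (n + 1)).comap (F (n + 1)).subtype) with hKdef
      have hKmem : ∀ x : F (n + 1), x ∈ K ↔ (x : U) ∈ F n := fun x => Iff.rfl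
      obtain ⟨s, hs⟩ := Module.projective_lifting_property K.mkQ
        (LinearMap.id (R := A) (M := filtQuot F (n + 1))) (Submodule.mkQ_surjective K)
      have hs' : ∀ z, K.mkQ (s z) = z := fun z => LinearMap.congr_fun hs z
      have hmem : ∀ x : F (n + 1), (x : U) - (s (K.mkQ x) : U) ∈ F n := by
        intro x
        have hx : x - s (K.mkQ x) ∈ K := by
          have h0 : K.mkQ (x - s (K.mkQ x)) = 0 := by
            rw [map_sub, hs' (K.mkQ x), sub_self]
          rwa [Submodule.mkQ_apply, Submodule.Quotient.mk_eq_zero] at h0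
        simpa using (hKmem _).1 hx
      let r : F (n + 1) →ₗ[A] F n :=
        { toFun := fun x => ⟨(x : U) - (s (K.mkQ x) : U), hmem x⟩
          map_add' := fun x y => by
            apply Subtype.ext
            simp only [map_add, Submodule.coe_add, AddSubmonoid.mk_add_mk]
            abel
          map_smul' := fun c x => by
            apply Subtype.ext
            simp only [map_smul, RingHom.id_apply, SetLike.val_smul, SetLike.mk_smul_mk,
              smul_sub] }
      have hincl0 : ∀ y : F n, K.mkQ (Submodule.inclusion (hmono n.le_succ) y) = 0 := by
        intro y
        rw [Submodule.mkQ_apply, Submodule.Quotient.mk_eq_zero]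
        exact (hKmem _).2 (by simpa using y.2)
      have r_incl : ∀ y : F n, r (Submodule.inclusion (hmono n.le_succ) y) = y := by
        intro y
        apply Subtype.ext
        show ((Submodule.inclusion (hmono n.le_succ) y : U) - _) = (y : U)
        rw [hincl0 y, map_zero]
        simp
      -- the splitting equivalence
      have hcomp1 : ∀ x : F (n + 1),
          Submodule.inclusion (hmono n.le_succ) (r x) + s (K.mkQ x) = x := by
        intro x
        apply Subtype.ext
        show ((r x : U) + (s (K.mkQ x) : U)) = (x : U)
        show ((x : U) - (s (K.mkQ x) : U)) + (s (K.mkQ x) : U) = (x : U)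
        abel
      let e : (F n × filtQuot F (n + 1)) ≃ₗ[A] F (n + 1) :=
        { toFun := fun yz => Submodule.inclusion (hmono n.le_succ) yz.1 + s yz.2
          map_add' := fun a b => by simp only [map_add, Prod.fst_add, Prod.snd_add]; abel
          map_smul' := fun c a => by
            simp only [map_smul, Prod.smul_fst, Prod.smul_snd, RingHom.id_apply, smul_add]
          invFun := fun x => (r x, K.mkQ x)
          left_inv := by
            rintro ⟨y, z⟩
            have hq : K.mkQ (Submodule.inclusion (hmono n.le_succ) y + s z) = z := by
              rw [map_add, hincl0 y, hs' z, zero_add]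
            have hr : r (Submodule.inclusion (hmono n.le_succ) y + s z) = y := by
              apply Subtype.ext
              show ((Submodule.inclusion (hmono n.le_succ) y + s z : F (n+1)) : U)
                  - (s (K.mkQ _) : U) = (y : U)
              rw [hq]
              push_cast
              abel
            exact Prod.ext hr hq
          right_inv := hcomp1 }
      refine ⟨Module.Projective.of_equiv e, p.comp r, ?_⟩
      have hone : (⟨1, h1 (n+1)⟩ : F (n+1)) =
          Submodule.inclusion (hmono n.le_succ) ⟨1, h1 n⟩ := rfl
      simp only [LinearMap.comp_apply, hone, r_incl, hp]
  -- each `F n` is flat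
  have flatF : ∀ n, Module.Flat A (F n) := by
    intro n
    haveI := (key n).1
    infer_instance
  -- `U` is flat
  have flatU : Module.Flat A U := by
    rw [Module.Flat.iff_rTensor_injective']
    intro I
    rw [injective_iff_map_eq_zero]
    intro x hx
    -- `x` lies in the image of some `I ⊗ F n`
    have hsup : (⊤ : Submodule A (↥I ⊗[A] U)) ≤
        ⨆ n, LinearMap.range (LinearMap.lTensor ↥I (F n).subtype) := by
      rw [← TensorProduct.span_tmul_eq_top, Submodule.span_le]
      rintro _ ⟨a, u, rfl⟩
      have hu : u ∈ ⨆ n, F n := hexh ▸ Submodule.mem_top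
      obtain ⟨n, hn⟩ := (Submodule.mem_iSup_of_directed _ hmono.directed_le).1 hu
      refine Submodule.mem_iSup_of_mem n ⟨a ⊗ₜ ⟨u, hn⟩, ?_⟩
      simp
    have hdir : Directed (· ≤ ·)
        (fun n => LinearMap.range (LinearMap.lTensor ↥I (F n).subtype)) := by
      refine Monotone.directed_le fun n m hnm => ?_
      have : (F m).subtype.comp (Submodule.inclusion (hmono hnm)) = (F n).subtype :=
        Submodule.subtype_comp_inclusion _ _ _
      rw [← this, LinearMap.lTensor_comp]
      exact LinearMap.range_comp_le_range _ _
    obtain ⟨n, y, hy⟩ := (Submodule.mem_iSup_of_directed _ hdir).1 (hsup Submodule.mem_top)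
    haveI := flatF n
    have hinj1 : Function.Injective (LinearMap.lTensor A (F n).subtype) :=
      Module.Flat.lTensor_preserves_injective_linearMap _ (Submodule.injective_subtype _)
    have hinj2 : Function.Injective (LinearMap.rTensor (F n) I.subtype) :=
      Module.Flat.rTensor_preserves_injective_linearMap _ (Submodule.injective_subtype _)
    have hzero : LinearMap.rTensor (F n) I.subtype y = 0 := by
      apply hinj1
      rw [map_zero]
      have : (LinearMap.lTensor A (F n).subtype).comp (LinearMap.rTensor (F n) I.subtype)
          = (LinearMap.rTensor U I.subtype).comp (LinearMap.lTensor ↥I (F n).subtype) := by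
        rw [LinearMap.lTensor_comp_rTensor, LinearMap.rTensor_comp_lTensor]
      calc LinearMap.lTensor A (F n).subtype (LinearMap.rTensor (F n) I.subtype y)
          = LinearMap.rTensor U I.subtype (LinearMap.lTensor ↥I (F n).subtype y) :=
            LinearMap.congr_fun this y
        _ = LinearMap.rTensor U I.subtype x := by rw [hy]
        _ = 0 := hx
    have hy0 : y = 0 := hinj2 (by rw [hzero, map_zero])
    rw [← hy, hy0, map_zero]
  -- faithfulness
  rw [Module.FaithfullyFlat.iff_flat_and_ideal_smul_eq_top]
  refine ⟨flatU, fun I hI => ?_⟩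
  have h1top : (1 : U) ∈ I • (⊤ : Submodule A U) := by rw [hI]; exact Submodule.mem_top
  rw [← hexh, Submodule.smul_iSup] at h1top
  have hdir : Directed (· ≤ ·) (fun n => I • F n) :=
    Monotone.directed_le fun n m hnm => Submodule.smul_mono le_rfl (hmono hnm)
  obtain ⟨n, hn⟩ := (Submodule.mem_iSup_of_directed _ hdir).1 h1top
  -- pull back to `F n`
  have hmap : I • F n = Submodule.map (F n).subtype (I • (⊤ : Submodule A (F n))) := by
    rw [Submodule.map_smul'', Submodule.map_top, Submodule.range_subtype]
  rw [hmap] at hn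
  obtain ⟨z, hz, hz1⟩ := hn
  obtain ⟨p, hp⟩ := (key n).2
  have hz' : z = ⟨1, h1 n⟩ := Subtype.ext hz1
  have hpz : p z ∈ I • (⊤ : Submodule A A) := by
    have h2 : p z ∈ Submodule.map p (I • (⊤ : Submodule A (F n))) :=
      Submodule.mem_map_of_mem hz
    rw [Submodule.map_smul''] at h2
    exact Submodule.smul_mono le_rfl le_top h2
  have : p z ∈ I := by
    rwa [Ideal.smul_eq_mul, Ideal.mul_top] at hpz
  rw [hz', hp] at this
  exact (Ideal.eq_top_iff_one I).2 this
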